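/- In the CRDA justified-envy-freeness proof, Case 4 cannot occur: there is no blocking pair (c, h) with c a matched rotated child (c ∈ R_C^t) and h a home whose final match was set in the MATCHING phase (h ∉ R_H^t); i.e., U_c(h) > U_c(μ_t(c)) and V_h(c) > V_h(μ_t(h)) is impossible for such c, h. -/

import Mathlib

/-- A one-to-one (partial) matching between children and homes. -/
structure Matching (C H : Type) where
  toHome : C → Option H
  toChild : H → Option C
  consistent : ∀ c h, toHome c = some h ↔ toChild h = some c

/-- A dynamic matching market: cardinal utilities, arrival times, waiting costs. -/
structure Market (C H : Type) where
  U : C → H → ℝ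
  V : H → C → ℝ
  arrC : C → ℕ
  arrH : H → ℕ
  wC : ℝ
  wH : ℝ

/-- Accept/reject action profiles of homes over time. -/
abbrev Actions (H : Type) := H → ℕ → Bool

/-- A dynamic mechanism: given the homes' action profile, a matching in each period. -/
abbrev Mechanism (C H : Type) := Actions H → ℕ → Matching C H

open scoped Classical in
/-- The counterfactual profile in which home `h` rejects every placement before `t'`,
accepts at `t'`, and otherwise plays as in `a`; all other homes play as in `a`. -/
noncomputable def cfProfile {H : Type} (a : Actions H) (h : H) (t' : ℕ) : Actions H :=
  fun h' k =>
    if h' = h then (if k < t' then false else if k = t' then true else a h' k)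
    else a h' k

namespace Market

variable {C H : Type}

/-- Time-discounted utility of home `h` for child `c` at time `t`:
`V_h^t(c) = V_h(c) - (t - arrival(h)) * w_H`. -/
noncomputable def Vt (M : Market C H) (h : H) (c : C) (t : ℕ) : ℝ :=
  M.V h c - ((t : ℝ) - (M.arrH h : ℝ)) * M.wH

/-- Child `c` is active (present in the market) at time `t`:
she has arrived and no home has yet accepted a placement with her. -/
def activeC (M : Market C H) (Q : Mechanism C H) (a : Actions H) (c : C) (t : ℕ) : Prop :=
  M.arrC c ≤ t ∧ ¬ ∃ k < t, ∃ h, (Q a k).toHome c = some h ∧ a h k = true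

/-- Home `h` is active (present in the market) at time `t`:
it has arrived and has not yet accepted a placement. -/
def activeH (M : Market C H) (Q : Mechanism C H) (a : Actions H) (h : H) (t : ℕ) : Prop :=
  M.arrH h ≤ t ∧ ¬ ∃ k < t, (Q a k).toChild h ≠ none ∧ a h k = true

/-- Admissibility: the mechanism only matches agents active in the current market. -/
def feasible (M : Market C H) (Q : Mechanism C H) : Prop :=
  ∀ a t c h, (Q a t).toHome c = some h → M.activeC Q a c t ∧ M.activeH Q a h t

/-- Child `c` has been adopted (placement accepted) by time `t`. -/
def childAdopted (M : Market C H) (Q : Mechanism C H) (a : Actions H) (c : C) (t : ℕ) : Prop :=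
  ∃ k ≤ t, ∃ h, (Q a k).toHome c = some h ∧ a h k = true

/-- Home `h` has accepted a placement by time `t`. -/
def homeAccepted (M : Market C H) (Q : Mechanism C H) (a : Actions H) (h : H) (t : ℕ) : Prop :=
  ∃ k ≤ t, (Q a k).toChild h ≠ none ∧ a h k = true

/-- Justified envy-freeness at every period and action profile: no mutually matched
child and home both strictly prefer each other to their assigned partners. -/
def justifiedEnvyFree (M : Market C H) (Q : Mechanism C H) : Prop :=
  ∀ a t c h h' c', (Q a t).toHome c = some h' → (Q a t).toChild h = some c' →
    ¬ (M.U c h' < M.U c h ∧ M.V h c' < M.V h c)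

/-- Individual rationality at every period and action profile. -/
def individuallyRational (M : Market C H) (Q : Mechanism C H) : Prop :=
  ∀ a t c h, (Q a t).toHome c = some h → 0 ≤ M.U c h ∧ 0 ≤ M.V h c

/-- Patience-freeness: any placement offered at `t` is weakly better (time-discounted)
than the placement the home would receive at any later `t'` in the counterfactual in
which it rejects all placements before `t'` and accepts at `t'`. -/
noncomputable def patienceFree (M : Market C H) (Q : Mechanism C H) : Prop :=
  ∀ (a : Actions H) (t : ℕ) (h : H) (c : C), (Q a t).toChild h = some c →
    ∀ t' > t, ∀ c', (Q (cfProfile a h t') t').toChild h = some c' →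
      M.Vt h c' t' ≤ M.Vt h c t

/-- Dynamic envy-freeness: justified envy-free, patience-free, individually rational. -/
noncomputable def dynamicEnvyFree (M : Market C H) (Q : Mechanism C H) : Prop :=
  M.justifiedEnvyFree Q ∧ M.patienceFree Q ∧ M.individuallyRational Q

/-- Strict non-wastefulness: after every history and action profile there is never an
active unmatched child and an active unmatched home that find each other acceptable. -/
def strictlyNonWasteful (M : Market C H) (Q : Mechanism C H) : Prop :=
  ∀ a t, ¬ ∃ c h, M.activeC Q a c t ∧ M.activeH Q a h t ∧
    0 ≤ M.U c h ∧ 0 ≤ M.V h c ∧ (Q a t).toHome c = none ∧ (Q a t).toChild h = none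

/-- Weak non-wastefulness: when every home accepts every offered placement,
no mutually acceptable unmatched pair ever remains. -/
def weaklyNonWasteful (M : Market C H) (Q : Mechanism C H) : Prop :=
  ∀ t, ¬ ∃ c h, M.activeC Q (fun _ _ => true) c t ∧ M.activeH Q (fun _ _ => true) h t ∧
    0 ≤ M.U c h ∧ 0 ≤ M.V h c ∧
    (Q (fun _ _ => true) t).toHome c = none ∧ (Q (fun _ _ => true) t).toChild h = none

/-- The mechanism is a deterministic function of the history of markets (active sets)
and past matchings. -/
def historyDetermined (M : Market C H) (Q : Mechanism C H) : Prop :=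
  ∀ a a' t,
    (∀ k ≤ t, ∀ c, M.activeC Q a c k ↔ M.activeC Q a' c k) →
    (∀ k ≤ t, ∀ h, M.activeH Q a h k ↔ M.activeH Q a' h k) →
    (∀ k < t, Q a k = Q a' k) →
    Q a t = Q a' t

/-- `x` is the realized (true-utility, time-discounted) payoff of home `h`:
the time-discounted utility of an accepted placement, or `0` if `h` never accepts. -/
noncomputable def payoffIs (M : Market C H) (Q : Mechanism C H) (a : Actions H)
    (h : H) (x : ℝ) : Prop :=
  (∃ t c, (Q a t).toChild h = some c ∧ a h t = true ∧ x = M.Vt h c t) ∨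
  ((∀ t c, (Q a t).toChild h = some c → a h t = false) ∧ x = 0)

end Market

namespace Market

variable {C H : Type}

/-- Stability (feasibility, individual rationality and no blocking pair) of a matching
on given sets of active children and homes. -/
def IsStableOn (M : Market C H) (aC : Set C) (aH : Set H) (μ : Matching C H) : Prop :=
  (∀ c h, μ.toHome c = some h → c ∈ aC ∧ h ∈ aH ∧ 0 ≤ M.U c h ∧ 0 ≤ M.V h c) ∧
  (∀ c h, c ∈ aC → h ∈ aH → 0 ≤ M.U c h → 0 ≤ M.V h c →
    ¬ ((∀ h', μ.toHome c = some h' → M.U c h' < M.U c h) ∧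
       (∀ c', μ.toChild h = some c' → M.V h c' < M.V h c)))

end Market

namespace Market

variable {C H : Type}

/-- Characterization of the output of child-proposing Deferred Acceptance:
the child-optimal stable matching on the given sets. -/
def IsChildOptimalOn (M : Market C H) (aC : Set C) (aH : Set H) (μ : Matching C H) : Prop :=
  M.IsStableOn aC aH μ ∧
  ∀ μ', M.IsStableOn aC aH μ' → ∀ c h, μ'.toHome c = some h →
    ∃ h', μ.toHome c = some h' ∧ M.U c h ≤ M.U c h'

/-- CRDA's trigger: some home whose most recently rejected placement had
time-discounted value `prev h` gets a strictly better match in the MATCHING phase. -/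
noncomputable def crdaTrigger (M : Market C H) (prev : H → Option ℝ) (t : ℕ)
    (μM : Matching C H) : Prop :=
  ∃ h c b, μM.toChild h = some c ∧ prev h = some b ∧ b < M.Vt h c t

/-- A child is flagged for rotation: some acceptable active home is strictly preferred
to her MATCHING match, or her assigned home improves on its previously rejected placement. -/
noncomputable def crdaFlagged (M : Market C H) (aH : Set H) (prev : H → Option ℝ)
    (t : ℕ) (μM : Matching C H) (c : C) : Prop :=
  (∃ h ∈ aH, 0 ≤ M.V h c ∧ ∀ h', μM.toHome c = some h' → M.U c h' < M.U c h) ∨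
  (∃ h b, μM.toHome c = some h ∧ prev h = some b ∧ b < M.Vt h c t)

/-- The set `\hat R_C^t`: flagged or unmatched active children. -/
noncomputable def crdaHatRC (M : Market C H) (aC : Set C) (aH : Set H)
    (prev : H → Option ℝ) (t : ℕ) (μM : Matching C H) : Set C :=
  {c ∈ aC | M.crdaFlagged aH prev t μM c ∨ μM.toHome c = none}

/-- The set `R_H^t`: active homes matched to flagged children, or unmatched. -/
noncomputable def crdaRH (M : Market C H) (aC : Set C) (aH : Set H)
    (prev : H → Option ℝ) (t : ℕ) (μM : Matching C H) : Set H :=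
  {h ∈ aH | (∃ c ∈ M.crdaHatRC aC aH prev t μM, μM.toChild h = some c) ∨
    μM.toChild h = none}

/-- The set `R_C^t`: children of `\hat R_C^t` weakly below every relevant home's
previously rejected placement value. -/
noncomputable def crdaRC (M : Market C H) (aC : Set C) (aH : Set H)
    (prev : H → Option ℝ) (t : ℕ) (μM : Matching C H) : Set C :=
  {c ∈ M.crdaHatRC aC aH prev t μM |
    ∀ h ∈ M.crdaRH aC aH prev t μM, 0 ≤ M.U c h →
      ∀ b, prev h = some b → M.Vt h c t ≤ b}

/-- One period of Child Rotating Deferred Acceptance on the market given by active sets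
`aC`, `aH`, where `prev h` records the time-discounted value of home `h`'s most recently
rejected placement (if any): first child-proposing DA (`μM`); if triggered, ROTATION
re-runs child-proposing DA (`μR`) on the rotation sets, children excluded from the
rotation set become unmatched, and all other agents keep their MATCHING placements. -/
structure CRDAStep (M : Market C H) (aC : Set C) (aH : Set H)
    (prev : H → Option ℝ) (t : ℕ) where
  μM : Matching C H
  μR : Matching C H
  μ : Matching C H
  matching_opt : M.IsChildOptimalOn aC aH μM
  no_trigger : ¬ M.crdaTrigger prev t μM → μ = μM
  rot_opt : M.crdaTrigger prev t μM →
    M.IsChildOptimalOn (M.crdaRC aC aH prev t μM) (M.crdaRH aC aH prev t μM) μR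
  final_rotC : M.crdaTrigger prev t μM →
    ∀ c ∈ M.crdaRC aC aH prev t μM, μ.toHome c = μR.toHome c
  final_rotH : M.crdaTrigger prev t μM →
    ∀ h ∈ M.crdaRH aC aH prev t μM, μ.toChild h = μR.toChild h
  final_dropC : M.crdaTrigger prev t μM →
    ∀ c ∈ M.crdaHatRC aC aH prev t μM, c ∉ M.crdaRC aC aH prev t μM → μ.toHome c = none
  final_keepC : M.crdaTrigger prev t μM →
    ∀ c ∈ aC, c ∉ M.crdaHatRC aC aH prev t μM → μ.toHome c = μM.toHome c
  final_keepH : M.crdaTrigger prev t μM →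
    ∀ h ∈ aH, h ∉ M.crdaRH aC aH prev t μM → μ.toChild h = μM.toChild h

end Market

/-! A rotated child `c` loses in ROTATION only if the home `h₀` she held after MATCHING now
holds a child `c'` whom `h₀` prefers to `c`; by MATCHING-stability `c'` then prefers her own
MATCHING home to `h₀`, so she is a loser too. Thus the MATCHING homes of the losers are ROTATION
homes of losers, and by finiteness the two sets of homes coincide. Giving every loser her
MATCHING home back and everyone else her ROTATION home is then a stable matching of the rotation
market that is strictly better for the losers, contradicting the child-optimality of ROTATION.
Hence `U_c(μ_t(c)) ≥ U_c(μ_t^M(c))`, and a rotated child envying `h ∉ R_H^t` would already have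
blocked MATCHING together with `h`. -/

namespace Matching

variable {C H : Type}

theorem eq_of_toHome_eq_some {μ : Matching C H} {c c' : C} {h : H}
    (hc : μ.toHome c = some h) (hc' : μ.toHome c' = some h) : c = c' :=
  Option.some_inj.mp (((μ.consistent c h).1 hc).symm.trans ((μ.consistent c' h).1 hc'))

def homesOf (μ : Matching C H) (L : Set C) : Set H :=
  {h | ∃ c ∈ L, μ.toHome c = some h}

theorem mem_homesOf_iff_of_toHome {μ : Matching C H} {L : Set C} {c : C} {h : H}
    (hch : μ.toHome c = some h) : h ∈ μ.homesOf L ↔ c ∈ L :=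
  ⟨fun ⟨_, hd, hdh⟩ => eq_of_toHome_eq_some hdh hch ▸ hd, fun hc => ⟨c, hc, hch⟩⟩

theorem exists_toHome_eq_of_finite {μ₁ μ₂ : Matching C H} {L : Set C} (hL : L.Finite)
    (hmatched : ∀ c ∈ L, ∃ h, μ₁.toHome c = some h ∧ ∃ c' ∈ L, μ₂.toHome c' = some h) :
    ∀ c' ∈ L, ∃ c ∈ L, μ₁.toHome c = μ₂.toHome c' := by
  have : Finite L := hL.to_subtype
  have hsucc : ∀ a : L, ∃ b : L, μ₂.toHome b = μ₁.toHome a := fun ⟨c, hc⟩ => by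
    obtain ⟨h, hch, c', hc', hc'h⟩ := hmatched c hc
    exact ⟨⟨c', hc'⟩, hc'h.trans hch.symm⟩
  choose f hf using hsucc
  have hinj : Function.Injective f := by
    intro a b hab
    obtain ⟨h, hah, -⟩ := hmatched a a.2
    have hbh : μ₁.toHome b = some h := by rw [← hf b, ← hab, hf a, hah]
    exact Subtype.ext (eq_of_toHome_eq_some hah hbh)
  intro c' hc'
  obtain ⟨a, ha⟩ := Finite.injective_iff_surjective.mp hinj ⟨c', hc'⟩
  exact ⟨a, a.2, by rw [← hf a, ha]⟩

open scoped Classical in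
noncomputable def piecewise (μ₁ μ₂ : Matching C H) (L : Set C) (G : Set H)
    (h₁ : ∀ c h, μ₁.toHome c = some h → (h ∈ G ↔ c ∈ L))
    (h₂ : ∀ c h, μ₂.toHome c = some h → (h ∈ G ↔ c ∈ L)) : Matching C H where
  toHome c := if c ∈ L then μ₁.toHome c else μ₂.toHome c
  toChild h := if h ∈ G then μ₁.toChild h else μ₂.toChild h
  consistent c h := by
    have e₁ := μ₁.consistent c h
    have e₂ := μ₂.consistent c h
    have g₁ := h₁ c h
    have g₂ := h₂ c h
    by_cases hc : c ∈ L <;> by_cases hh : h ∈ G <;> simp only [hc, hh, if_true, if_false] <;>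
      tauto

section piecewise

variable {μ₁ μ₂ : Matching C H} {L : Set C} {G : Set H}
  {h₁ : ∀ c h, μ₁.toHome c = some h → (h ∈ G ↔ c ∈ L)}
  {h₂ : ∀ c h, μ₂.toHome c = some h → (h ∈ G ↔ c ∈ L)} {c : C} {h : H}

theorem piecewise_toHome_of_mem (hc : c ∈ L) :
    (μ₁.piecewise μ₂ L G h₁ h₂).toHome c = μ₁.toHome c := by
  simp [piecewise, hc]

theorem piecewise_toHome_of_notMem (hc : c ∉ L) :
    (μ₁.piecewise μ₂ L G h₁ h₂).toHome c = μ₂.toHome c := by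
  simp [piecewise, hc]

theorem piecewise_toChild_of_mem (hh : h ∈ G) :
    (μ₁.piecewise μ₂ L G h₁ h₂).toChild h = μ₁.toChild h := by
  simp [piecewise, hh]

theorem piecewise_toChild_of_notMem (hh : h ∉ G) :
    (μ₁.piecewise μ₂ L G h₁ h₂).toChild h = μ₂.toChild h := by
  simp [piecewise, hh]

end piecewise

end Matching

namespace Market

variable {C H : Type}

/-- Being unmatched (`o = none`) is worse than any home. -/
def ChildPrefers (M : Market C H) (c : C) (h : H) (o : Option H) : Prop :=
  ∀ h', o = some h' → M.U c h' < M.U c h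

def HomePrefers (M : Market C H) (h : H) (c : C) (o : Option C) : Prop :=
  ∀ c', o = some c' → M.V h c' < M.V h c

variable {M : Market C H} {c : C} {h h' : H} {o : Option H}

@[simp]
theorem childPrefers_some : M.ChildPrefers c h (some h') ↔ M.U c h' < M.U c h := by
  simp [ChildPrefers]

@[simp]
theorem homePrefers_some {c c' : C} : M.HomePrefers h c (some c') ↔ M.V h c' < M.V h c := by
  simp [HomePrefers]

theorem not_childPrefers_iff :
    ¬ M.ChildPrefers c h o ↔ ∃ h', o = some h' ∧ M.U c h ≤ M.U c h' := by
  simp [ChildPrefers]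

theorem not_homePrefers_iff {o : Option C} :
    ¬ M.HomePrefers h c o ↔ ∃ c', o = some c' ∧ M.V h c ≤ M.V h c' := by
  simp [HomePrefers]

theorem ChildPrefers.mono (hle : M.U c h ≤ M.U c h') (hp : M.ChildPrefers c h o) :
    M.ChildPrefers c h' o :=
  fun g hg => (hp g hg).trans_le hle

theorem IsStableOn.not_blocks {aC : Set C} {aH : Set H} {μ : Matching C H}
    (hμ : M.IsStableOn aC aH μ) (hc : c ∈ aC) (hh : h ∈ aH) (hU : 0 ≤ M.U c h)
    (hV : 0 ≤ M.V h c) (hcp : M.ChildPrefers c h (μ.toHome c)) :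
    ¬ M.HomePrefers h c (μ.toChild h) :=
  fun hhp => hμ.2 c h hc hh hU hV ⟨hcp, hhp⟩

structure IsRotationPhase (M : Market C H) (A : Set C) (B : Set H) (A' : Set C) (B' : Set H)
    (μ₁ μ₂ : Matching C H) : Prop where
  stable₁ : M.IsStableOn A B μ₁
  optimal₂ : M.IsChildOptimalOn A' B' μ₂
  subset_children : A' ⊆ A
  subset_homes : B' ⊆ B
  toHome_mem : ∀ c ∈ A', ∀ h, μ₁.toHome c = some h → h ∈ B'

def losers (M : Market C H) (A' : Set C) (μ₁ μ₂ : Matching C H) : Set C :=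
  {c ∈ A' | ∃ h, μ₁.toHome c = some h ∧ M.ChildPrefers c h (μ₂.toHome c)}

namespace IsRotationPhase

variable {A A' : Set C} {B B' : Set H} {μ₁ μ₂ : Matching C H}

theorem exists_mem_losers_toHome_eq (hR : M.IsRotationPhase A B A' B' μ₁ μ₂)
    (strictU : ∀ c h h', h ≠ h' → M.U c h ≠ M.U c h')
    (strictV : ∀ h c c', c ≠ c' → M.V h c ≠ M.V h c')
    (hc : c ∈ M.losers A' μ₁ μ₂) (hch : μ₁.toHome c = some h) :
    ∃ c' ∈ M.losers A' μ₁ μ₂, μ₂.toHome c' = some h := by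
  obtain ⟨hcA', g, hcg, hcp⟩ := hc
  obtain rfl : g = h := Option.some_inj.mp (hcg.symm.trans hch)
  obtain ⟨-, -, hU, hV⟩ := hR.stable₁.1 c g hcg
  have hgB' := hR.toHome_mem c hcA' g hcg
  obtain ⟨c', hgc', hle⟩ := not_homePrefers_iff.mp (hR.optimal₂.1.not_blocks hcA' hgB' hU hV hcp)
  have hc'g := (μ₂.consistent c' g).2 hgc'
  have hne : c ≠ c' := by
    rintro rfl
    simp [hc'g] at hcp
  obtain ⟨hc'A', -, hU', hV'⟩ := hR.optimal₂.1.1 c' g hc'g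
  have hgp : M.HomePrefers g c' (μ₁.toChild g) := by
    rw [(μ₁.consistent c g).1 hcg, homePrefers_some]
    exact hle.lt_of_ne (strictV g c c' hne)
  obtain ⟨g', hc'g', hle'⟩ := not_childPrefers_iff.mp fun hcp' =>
    hR.stable₁.not_blocks (hR.subset_children hc'A') (hR.subset_homes hgB') hU' hV' hcp' hgp
  have hne' : g ≠ g' := by
    rintro rfl
    exact hne (Matching.eq_of_toHome_eq_some hcg hc'g')
  refine ⟨c', ⟨hc'A', g', hc'g', ?_⟩, hc'g⟩
  rw [hc'g, childPrefers_some]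
  exact hle'.lt_of_ne (strictU c' g g' hne')

theorem mem_homesOf_losers_iff [Finite C] (hR : M.IsRotationPhase A B A' B' μ₁ μ₂)
    (strictU : ∀ c h h', h ≠ h' → M.U c h ≠ M.U c h')
    (strictV : ∀ h c c', c ≠ c' → M.V h c ≠ M.V h c')
    (hch : μ₂.toHome c = some h) :
    h ∈ μ₁.homesOf (M.losers A' μ₁ μ₂) ↔ c ∈ M.losers A' μ₁ μ₂ := by
  constructor
  · rintro ⟨d, hd, hdh⟩
    obtain ⟨c', hc', hc'h⟩ := hR.exists_mem_losers_toHome_eq strictU strictV hd hdh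
    exact Matching.eq_of_toHome_eq_some hc'h hch ▸ hc'
  · intro hc
    have hmatched : ∀ d ∈ M.losers A' μ₁ μ₂, ∃ g, μ₁.toHome d = some g ∧
        ∃ d' ∈ M.losers A' μ₁ μ₂, μ₂.toHome d' = some g := fun d hd =>
      let ⟨_, g, hdg, _⟩ := hd
      ⟨g, hdg, hR.exists_mem_losers_toHome_eq strictU strictV hd hdg⟩
    obtain ⟨d, hd, hdc⟩ := Matching.exists_toHome_eq_of_finite (Set.toFinite _) hmatched c hc
    exact ⟨d, hd, hdc.trans hch⟩

/-- Every child weakly prefers her new home to both old ones, so a blocking pair would block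
`μ₁` or `μ₂`, according to which partner the home kept. -/
theorem isStableOn_piecewise (hR : M.IsRotationPhase A B A' B' μ₁ μ₂) {G : Set H}
    (h₁ : ∀ c h, μ₁.toHome c = some h → (h ∈ G ↔ c ∈ M.losers A' μ₁ μ₂))
    (h₂ : ∀ c h, μ₂.toHome c = some h → (h ∈ G ↔ c ∈ M.losers A' μ₁ μ₂)) :
    M.IsStableOn A' B' (μ₁.piecewise μ₂ (M.losers A' μ₁ μ₂) G h₁ h₂) := by
  refine ⟨fun c h hch => ?_, fun c h hc hh hU hV hblock => ?_⟩
  · by_cases hcL : c ∈ M.losers A' μ₁ μ₂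
    · rw [Matching.piecewise_toHome_of_mem hcL] at hch
      obtain ⟨-, -, hU, hV⟩ := hR.stable₁.1 c h hch
      exact ⟨hcL.1, hR.toHome_mem c hcL.1 h hch, hU, hV⟩
    · rw [Matching.piecewise_toHome_of_notMem hcL] at hch
      exact hR.optimal₂.1.1 c h hch
  obtain ⟨hcp, hhp⟩ : M.ChildPrefers c h _ ∧ M.HomePrefers h c _ := hblock
  by_cases hhG : h ∈ G
  · rw [Matching.piecewise_toChild_of_mem hhG] at hhp
    refine hR.stable₁.not_blocks (hR.subset_children hc) (hR.subset_homes hh) hU hV ?_ hhp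
    by_cases hcL : c ∈ M.losers A' μ₁ μ₂
    · rwa [Matching.piecewise_toHome_of_mem hcL] at hcp
    · rw [Matching.piecewise_toHome_of_notMem hcL] at hcp
      intro g hcg
      by_contra hle
      exact hcL ⟨hc, g, hcg, hcp.mono (not_lt.mp hle)⟩
  · rw [Matching.piecewise_toChild_of_notMem hhG] at hhp
    refine hR.optimal₂.1.not_blocks hc hh hU hV ?_ hhp
    by_cases hcL : c ∈ M.losers A' μ₁ μ₂
    · rw [Matching.piecewise_toHome_of_mem hcL] at hcp
      obtain ⟨-, g, hcg, hgp⟩ := hcL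
      rw [hcg, childPrefers_some] at hcp
      exact hgp.mono hcp.le
    · rwa [Matching.piecewise_toHome_of_notMem hcL] at hcp

theorem not_childPrefers [Finite C] (hR : M.IsRotationPhase A B A' B' μ₁ μ₂)
    (strictU : ∀ c h h', h ≠ h' → M.U c h ≠ M.U c h')
    (strictV : ∀ h c c', c ≠ c' → M.V h c ≠ M.V h c')
    (hc : c ∈ A') (hch : μ₁.toHome c = some h) : ¬ M.ChildPrefers c h (μ₂.toHome c) := by
  intro hcp
  have hcL : c ∈ M.losers A' μ₁ μ₂ := ⟨hc, h, hch, hcp⟩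
  let ν := μ₁.piecewise μ₂ (M.losers A' μ₁ μ₂) (μ₁.homesOf (M.losers A' μ₁ μ₂))
    (fun _ _ => Matching.mem_homesOf_iff_of_toHome)
    (fun _ _ => hR.mem_homesOf_losers_iff strictU strictV)
  obtain ⟨h', hch', hle⟩ := hR.optimal₂.2 ν (hR.isStableOn_piecewise _ _) c h
    ((Matching.piecewise_toHome_of_mem hcL).trans hch)
  rw [hch', childPrefers_some] at hcp
  exact hle.not_gt hcp

end IsRotationPhase

theorem CRDAStep.isRotationPhase {aC : Set C} {aH : Set H} {prev : H → Option ℝ} {t : ℕ}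
    (S : M.CRDAStep aC aH prev t) (htrig : M.crdaTrigger prev t S.μM) :
    M.IsRotationPhase aC aH (M.crdaRC aC aH prev t S.μM) (M.crdaRH aC aH prev t S.μM)
      S.μM S.μR where
  stable₁ := S.matching_opt.1
  optimal₂ := S.rot_opt htrig
  subset_children _ hc := hc.1.1
  subset_homes _ hh := hh.1
  toHome_mem c hc h hch :=
    ⟨(S.matching_opt.1.1 c h hch).2.1, Or.inl ⟨c, hc.1, (S.μM.consistent c h).1 hch⟩⟩

end Market

theorem crda_case4_impossible_general {C H : Type} [Finite C] (M : Market C H)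
    (aC : Set C) (aH : Set H) (prev : H → Option ℝ) (t : ℕ)
    (S : Market.CRDAStep M aC aH prev t)
    (strictU : ∀ c h h', h ≠ h' → M.U c h ≠ M.U c h')
    (strictV : ∀ h c c', c ≠ c' → M.V h c ≠ M.V h c')
    (htrig : M.crdaTrigger prev t S.μM)
    (c : C) (hc : c ∈ M.crdaRC aC aH prev t S.μM)
    (h : H) (hh : h ∈ aH) (hnot : h ∉ M.crdaRH aC aH prev t S.μM)
    (h' : H) (c' : C) (hmc : S.μ.toHome c = some h') (hmh : S.μ.toChild h = some c') :
    ¬ (M.U c h' < M.U c h ∧ M.V h c' < M.V h c) := by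
  rintro ⟨hU, hV⟩
  have hR := S.isRotationPhase htrig
  have hRc : S.μR.toHome c = some h' := S.final_rotC htrig c hc ▸ hmc
  have hMh : S.μM.toChild h = some c' := S.final_keepH htrig h hh hnot ▸ hmh
  have hU0 : 0 ≤ M.U c h := (hR.optimal₂.1.1 c h' hRc).2.2.1.trans hU.le
  have hV0 : 0 ≤ M.V h c :=
    (hR.stable₁.1 c' h ((S.μM.consistent c' h).2 hMh)).2.2.2.trans hV.le
  have hhp : M.HomePrefers h c (S.μM.toChild h) := by rwa [hMh, Market.homePrefers_some]
  obtain ⟨h₀, hMc, hle⟩ := Market.not_childPrefers_iff.mp fun hcp =>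
    hR.stable₁.not_blocks (hR.subset_children hc) hh hU0 hV0 hcp hhp
  refine hR.not_childPrefers strictU strictV hc hMc ?_
  rw [hRc, Market.childPrefers_some]
  exact hU.trans_le hle

/-- Case 4 of the CRDA justified-envy-freeness proof is impossible: in a triggered
period there is no blocking pair consisting of a matched rotated child `c ∈ R_C^t`
and a home `h ∉ R_H^t` whose final match was set in the MATCHING phase. -/
theorem crda_case4_impossible {C H : Type} [Finite C] [Finite H] (M : Market C H)
    (aC : Set C) (aH : Set H) (prev : H → Option ℝ) (t : ℕ)
    (S : Market.CRDAStep M aC aH prev t)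
    (strictU : ∀ c h h', h ≠ h' → M.U c h ≠ M.U c h')
    (strictV : ∀ h c c', c ≠ c' → M.V h c ≠ M.V h c')
    (htrig : M.crdaTrigger prev t S.μM)
    (c : C) (hc : c ∈ M.crdaRC aC aH prev t S.μM)
    (h : H) (hh : h ∈ aH) (hnot : h ∉ M.crdaRH aC aH prev t S.μM)
    (h' : H) (c' : C) (hmc : S.μ.toHome c = some h') (hmh : S.μ.toChild h = some c') :
    ¬ (M.U c h' < M.U c h ∧ M.V h c' < M.V h c) :=
  crda_case4_impossible_general M aC aH prev t S strictU strictV htrig c hc h hh hnot h' c' hmc hmh
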